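/- arXiv:2604.05324 — 2 statements merged into one kernel-verified Lean document; each statement's English description precedes it below -/
import Mathlib

section
/- If the negative log-likelihood of a model q on an i.i.d. sample from q^⋆ satisfies nll(q,S) ≤ nll(q^⋆,S) + c, then conditioned on getting m samples, the probability of this event is at most exp(mc/2 − m·H²(q^⋆,q)), where H² is the squared Hellinger distance. -/
open Finset

/-- The probability (over `m` i.i.d. samples from `q^⋆ = p`) that
`nll(q,S) ≤ nll(q^⋆,S) + c` is at most `exp(mc/2 − m·H²(q^⋆,q))`, where
`H²(q^⋆,q) = 1 − ∑ x √(q^⋆(x) q(x))`. -/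
theorem nll_close_prob_le
    {X : Type*} [Fintype X] (m : ℕ) (hm : 0 < m) (c : ℝ)
    (p q : X → ℝ) (hp : ∀ x, 0 < p x) (hq : ∀ x, 0 < q x)
    (hp1 : ∑ x, p x = 1) (hq1 : ∑ x, q x = 1) :
    (∑ xs : Fin m → X, (∏ i, p (xs i)) *
        (if -(1 / (m : ℝ)) * ∑ i, Real.log (q (xs i)) ≤
            -(1 / (m : ℝ)) * ∑ i, Real.log (p (xs i)) + c then (1 : ℝ) else 0)) ≤
      Real.exp ((m : ℝ) * c / 2 - (m : ℝ) * (1 - ∑ x, Real.sqrt (p x * q x))) := by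
  set A : ℝ := ∑ x, Real.sqrt (p x * q x) with hA
  have hAnn : 0 ≤ A := Finset.sum_nonneg fun x _ => Real.sqrt_nonneg _
  have hmpos : (0:ℝ) < m := Nat.cast_pos.mpr hm
  have step1 : (∑ xs : Fin m → X, (∏ i, p (xs i)) *
        (if -(1 / (m : ℝ)) * ∑ i, Real.log (q (xs i)) ≤
            -(1 / (m : ℝ)) * ∑ i, Real.log (p (xs i)) + c then (1 : ℝ) else 0)) ≤
      ∑ xs : Fin m → X, Real.exp ((m:ℝ) * c / 2) * ∏ i, Real.sqrt (p (xs i) * q (xs i)) := by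
    apply Finset.sum_le_sum
    intro xs _
    set Sp : ℝ := ∑ i, Real.log (p (xs i)) with hSp
    set Sq : ℝ := ∑ i, Real.log (q (xs i)) with hSq
    have hprod : (∏ i, p (xs i)) = Real.exp Sp := by
      rw [hSp, Real.exp_sum]
      exact Finset.prod_congr rfl fun i _ => (Real.exp_log (hp _)).symm
    have hprodsq : (∏ i, Real.sqrt (p (xs i) * q (xs i))) = Real.exp ((Sp + Sq) / 2) := by
      rw [hSp, hSq, ← Finset.sum_add_distrib, Finset.sum_div, Real.exp_sum]
      refine Finset.prod_congr rfl fun i _ => ?_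
      rw [← Real.exp_log (Real.sqrt_pos.mpr (mul_pos (hp _) (hq _))),
        Real.log_sqrt (mul_pos (hp _) (hq _)).le, Real.log_mul (hp _).ne' (hq _).ne']
    split_ifs with h
    · rw [mul_one, hprod, hprodsq, ← Real.exp_add]
      apply Real.exp_le_exp.mpr
      have h2 : -Sq ≤ -Sp + (m:ℝ) * c := by
        have h3 := mul_le_mul_of_nonneg_left h hmpos.le
        have hc : (m:ℝ) * (1/m) = 1 := mul_one_div_cancel hmpos.ne'
        have e1 : (m:ℝ) * (-(1 / (m:ℝ)) * Sq) = -Sq := by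
          rw [← mul_assoc, mul_neg, hc]; ring
        have e2 : (m:ℝ) * (-(1 / (m:ℝ)) * Sp + c) = -Sp + m * c := by
          rw [mul_add, ← mul_assoc, mul_neg, hc]; ring
        rw [e1, e2] at h3; exact h3
      linarith
    · rw [mul_zero]
      positivity
  have step2 : (∑ xs : Fin m → X, Real.exp ((m:ℝ) * c / 2) *
        ∏ i, Real.sqrt (p (xs i) * q (xs i))) = Real.exp ((m:ℝ) * c / 2) * A ^ m := by
    rw [← Finset.mul_sum, hA, Fintype.sum_pow]
  have step3 : A ^ m ≤ Real.exp ((m:ℝ) * (A - 1)) := by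
    have h1 : A ≤ Real.exp (A - 1) := by
      have := Real.add_one_le_exp (A - 1); linarith
    calc A ^ m ≤ Real.exp (A - 1) ^ m := pow_le_pow_left₀ hAnn h1 m
      _ = Real.exp ((m:ℝ) * (A - 1)) := by rw [← Real.exp_nat_mul]
  calc _ ≤ Real.exp ((m:ℝ) * c / 2) * A ^ m := by rw [← step2]; exact step1
    _ ≤ Real.exp ((m:ℝ) * c / 2) * Real.exp ((m:ℝ) * (A - 1)) := by
        exact mul_le_mul_of_nonneg_left step3 (Real.exp_pos _).le
    _ = Real.exp ((m:ℝ) * c / 2 - (m:ℝ) * (1 - A)) := by rw [← Real.exp_add]; ring_nf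
end

section
/- Let X = {x₀,x₁,x₂}, and for η ∈ (0,1), M > 0 define q₁ = (1−η−ηe^{−M}, ηe^{−M}, η) and q₂ = (1−η−ηe^{−M}, η, ηe^{−M}) (as probability vectors on (x₀,x₁,x₂)). Then for α > 1, the α-Rényi divergence satisfies D_α(q₂‖q₁) ≥ (1/(α−1))·log(η·e^{(α−1)M}); in particular, choosing η = e^{−(α−1)M/2} gives D_α(q₂‖q₁) ≥ M/2. -/
open Finset

/-- With `q₁ = (1−η−ηe^{−M}, ηe^{−M}, η)` and `q₂ = (1−η−ηe^{−M}, η, ηe^{−M})`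
on three points, for `α > 1` the α-Rényi divergence satisfies
`D_α(q₂‖q₁) ≥ (1/(α−1))·log(η·e^{(α−1)M})`; in particular, for `η = e^{−(α−1)M/2}` we get
`D_α(q₂‖q₁) ≥ M/2`. -/
theorem renyi_lower_bound
    (η M α : ℝ) (hη : 0 < η) (hη1 : η < 1) (hM : 0 < M) (hα : 1 < α)
    (hpos : 0 < 1 - η - η * Real.exp (-M))
    (q1 q2 : Fin 3 → ℝ)
    (hq1 : q1 = ![1 - η - η * Real.exp (-M), η * Real.exp (-M), η])
    (hq2 : q2 = ![1 - η - η * Real.exp (-M), η, η * Real.exp (-M)]) :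
    (1 / (α - 1)) * Real.log (η * Real.exp ((α - 1) * M)) ≤
      (1 / (α - 1)) * Real.log (∑ x, q2 x ^ α * q1 x ^ (1 - α)) ∧
    (η = Real.exp (-(α - 1) * M / 2) →
      M / 2 ≤ (1 / (α - 1)) * Real.log (∑ x, q2 x ^ α * q1 x ^ (1 - α))) := by
  subst hq1 hq2
  have hsum : ∑ x, (![1 - η - η * Real.exp (-M), η, η * Real.exp (-M)] : Fin 3 → ℝ) x ^ α *
      (![1 - η - η * Real.exp (-M), η * Real.exp (-M), η] : Fin 3 → ℝ) x ^ (1 - α) =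
      (1 - η - η * Real.exp (-M)) ^ α * (1 - η - η * Real.exp (-M)) ^ (1 - α) +
      η ^ α * (η * Real.exp (-M)) ^ (1 - α) +
      (η * Real.exp (-M)) ^ α * η ^ (1 - α) := by
    simp [Fin.sum_univ_three]
  have hmid : η ^ α * (η * Real.exp (-M)) ^ (1 - α) = η * Real.exp ((α - 1) * M) := by
    rw [Real.mul_rpow hη.le (Real.exp_pos _).le, ← Real.exp_mul,
      ← mul_assoc, ← Real.rpow_add hη]
    ring_nf
    rw [Real.rpow_one]
    ring
  have hkey : η * Real.exp ((α - 1) * M) ≤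
      ∑ x, (![1 - η - η * Real.exp (-M), η, η * Real.exp (-M)] : Fin 3 → ℝ) x ^ α *
      (![1 - η - η * Real.exp (-M), η * Real.exp (-M), η] : Fin 3 → ℝ) x ^ (1 - α) := by
    rw [hsum, ← hmid]
    have h1 : 0 ≤ (1 - η - η * Real.exp (-M)) ^ α * (1 - η - η * Real.exp (-M)) ^ (1 - α) :=
      mul_nonneg (Real.rpow_nonneg hpos.le _) (Real.rpow_nonneg hpos.le _)
    have h2 : 0 ≤ (η * Real.exp (-M)) ^ α * η ^ (1 - α) :=
      mul_nonneg (Real.rpow_nonneg (by positivity) _) (Real.rpow_nonneg hη.le _)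
    linarith
  have hlpos : 0 < η * Real.exp ((α - 1) * M) := by positivity
  have hlog := Real.log_le_log hlpos hkey
  have hα1 : (0:ℝ) < α - 1 := by linarith
  have hc : (0:ℝ) ≤ 1 / (α - 1) := by positivity
  refine ⟨mul_le_mul_of_nonneg_left hlog hc, fun hηe => ?_⟩
  refine le_trans ?_ (mul_le_mul_of_nonneg_left hlog hc)
  rw [hηe, ← Real.exp_add, Real.log_exp]
  have h2 : -(α - 1) * M / 2 + (α - 1) * M = (α - 1) * (M / 2) := by ring
  rw [h2, one_div, inv_mul_cancel_left₀ hα1.ne']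
end
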